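/- Let a > 1. There exist constants ρ₁ > 0 and ρ₂ > 0 such that ρ(x) = (ρ₁/π)|x − z₁|^{1/2}(1 + O(|x − z₁|)) as x → z₁ with x ∈ (z₂,z₁), and ρ(x) = (ρ₂/π)|x − z₂|^{1/2}(1 + O(|x − z₂|)) as x → z₂ with x ∈ (z₂,z₁); by the symmetry ρ(−x) = ρ(x), the same square-root vanishing with the same constants ρ₁, ρ₂ holds at the edge points −z₁ and −z₂ from within (−z₁,−z₂). In particular ρ vanishes like a square root at each edge point of its support. -/

import Mathlib

/-!
Write a non-real root of the Pastur cubic at `x` as `u + iv`. Matching coefficients in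
`(ξ² - 2uξ + u² + v²)(ξ - (x - 2u))` expresses `v²` and `x` as explicit smooth functions `w(u)`,
`X(u)` of the real part, so that `π ρ(X(u)) = √(w(u))` wherever `w(u) > 0`. At `u = q` and
`u = -p` one finds `w = 0`, `X = z₁` resp. `-z₂`, `w' < 0` and `X' > 0`. For any `C²` pair with
these properties, Taylor expansion to second order at such a point `b` gives
`w(u) = (-w'(b)/X'(b)) (X(b) - X(u)) + O((X(b) - X(u))²)`, and taking square roots yields the
square-root edge with `ρ = √(-w'(b)/X'(b))`. The edges `z₂` and `-z₁` follow from `ρ(-x) = ρ(x)`: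
`-ξ` is a root at `-x` whenever `ξ` is one at `x`, and a real cubic has at most one pair of
non-real roots.
-/

open MeasureTheory Filter Topology Polynomial Asymptotics

noncomputable section

/-- `√(1+8a²)` -/
def s8 (a : ℝ) : ℝ := Real.sqrt (1 + 8 * a ^ 2)

/-- the critical point `p` -/
def pBr (a : ℝ) : ℝ := Real.sqrt (1 / 2 + a ^ 2 - s8 a / 2)

/-- the critical point `q` -/
def qBr (a : ℝ) : ℝ := Real.sqrt (1 / 2 + a ^ 2 + s8 a / 2)

/-- the right edge point `z₁` -/
def z1 (a : ℝ) : ℝ := qBr a * (s8 a + 3) / (s8 a + 1)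

/-- the left edge point `z₂` of the right interval -/
def z2 (a : ℝ) : ℝ := pBr a * (s8 a - 3) / (s8 a - 1)

open scoped Classical in
/-- the Pastur density: `(1/π)|Im ξ|` for a non-real root `ξ` of the Pastur cubic, `0` else. -/
def pasturRho (a x : ℝ) : ℝ :=
  if h : ∃ ξ : ℂ, ξ ^ 3 - (x : ℂ) * ξ ^ 2 - ((a : ℂ) ^ 2 - 1) * ξ + (x : ℂ) * (a : ℂ) ^ 2 = 0 ∧
      ξ.im ≠ 0
  then |h.choose.im| / Real.pi
  else 0

open Set

lemma exists_eventually_abs_sub_sub_deriv_mul_le {f : ℝ → ℝ} (hf : ContDiff ℝ 2 f) (b : ℝ) :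
    ∃ K > 0, ∀ᶠ u in 𝓝[<] b, |f b - f u - deriv f b * (b - u)| ≤ K * (b - u) ^ 2 := by
  obtain ⟨K, s, hs, hK⟩ := (hf.deriv' (n := 1)).contDiffAt (x := b).exists_lipschitzOnWith
  obtain ⟨r, hr, hball⟩ := Metric.mem_nhds_iff.1 hs
  refine ⟨K + 1, by positivity, ?_⟩
  filter_upwards [Ioo_mem_nhdsLT (sub_lt_self b hr)] with u hu
  have hub : 0 < b - u := sub_pos.2 hu.2
  obtain ⟨c, ⟨huc, hcb⟩, hslope⟩ := exists_deriv_eq_slope f hu.2 hf.continuous.continuousOn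
    (hf.differentiable (by norm_num)).differentiableOn
  have hderiv : |deriv f c - deriv f b| ≤ K * (b - u) := by
    have hcs : c ∈ s := hball <| by
      rw [Metric.mem_ball, Real.dist_eq, abs_lt]; constructor <;> linarith [hu.1]
    have := hK.dist_le_mul c hcs b (hball (Metric.mem_ball_self hr))
    rw [Real.dist_eq, Real.dist_eq, abs_sub_comm c b, abs_of_pos (sub_pos.2 hcb)] at this
    exact this.trans (mul_le_mul_of_nonneg_left (by linarith) K.2)
  calc |f b - f u - deriv f b * (b - u)| = |(deriv f c - deriv f b) * (b - u)| := by
        rw [hslope]; congr 1; field_simp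
    _ = |deriv f c - deriv f b| * (b - u) := by rw [abs_mul, abs_of_pos hub]
    _ ≤ K * (b - u) * (b - u) := by gcongr
    _ ≤ (K + 1) * (b - u) ^ 2 := by nlinarith

lemma abs_sqrt_sub_sqrt_le (A : ℝ) {B : ℝ} (hB : 0 < B) : |√A - √B| ≤ |A - B| / √B := by
  have hsB := Real.sqrt_pos.2 hB
  rw [le_div_iff₀ hsB]
  rcases le_total A 0 with hA | hA
  · rw [Real.sqrt_eq_zero'.2 hA, zero_sub, abs_neg, abs_of_pos hsB, Real.mul_self_sqrt hB.le,
      abs_of_neg (by linarith)]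
    linarith
  · have hsum : 0 ≤ √A + √B := by positivity
    calc |√A - √B| * √B ≤ |√A - √B| * (√A + √B) := by gcongr; linarith [Real.sqrt_nonneg A]
      _ = |A - B| := by
        rw [← abs_of_nonneg hsum, ← abs_mul]
        congr 1
        nlinarith [Real.mul_self_sqrt hA, Real.mul_self_sqrt hB.le]

lemma abs_sub_div_mul_le_of_abs_sub_mul_le {α β K₁ K₂ d w t : ℝ} (hα : 0 < α) (hβ : 0 < β)
    (hd : 0 < d) (hK₁ : K₁ * d ≤ α / 2) (hK₂ : K₂ * d ≤ β / 2)
    (hw : |w - α * d| ≤ K₁ * d ^ 2) (ht : |t - β * d| ≤ K₂ * d ^ 2) :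
    0 < w ∧ 0 < t ∧ |w - α / β * t| ≤ (K₁ + α / β * K₂) * (2 / β) ^ 2 * t ^ 2 := by
  have hwd : α / 2 * d ≤ w := by nlinarith [(abs_le.1 hw).1]
  have htd : β / 2 * d ≤ t := by nlinarith [(abs_le.1 ht).1]
  have hdt : d ≤ 2 / β * t := by rw [div_mul_eq_mul_div (2 : ℝ) β t, le_div_iff₀ hβ]; linarith
  have hK₁0 : 0 ≤ K₁ := nonneg_of_mul_nonneg_left ((abs_nonneg _).trans hw) (by positivity)
  have hK₂0 : 0 ≤ K₂ := nonneg_of_mul_nonneg_left ((abs_nonneg _).trans ht) (by positivity)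
  refine ⟨by nlinarith, by nlinarith, ?_⟩
  calc |w - α / β * t| = |(w - α * d) - α / β * (t - β * d)| := by congr 1; field_simp; ring
    _ ≤ |w - α * d| + α / β * |t - β * d| :=
        (abs_sub _ _).trans_eq (by rw [abs_mul, abs_of_pos (div_pos hα hβ)])
    _ ≤ K₁ * d ^ 2 + α / β * (K₂ * d ^ 2) := by gcongr
    _ = (K₁ + α / β * K₂) * d ^ 2 := by ring
    _ ≤ (K₁ + α / β * K₂) * (2 / β * t) ^ 2 := by gcongr
    _ = (K₁ + α / β * K₂) * (2 / β) ^ 2 * t ^ 2 := by ring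

lemma eventually_mul_sub_le (K : ℝ) {b m : ℝ} (hm : 0 < m) :
    ∀ᶠ u in 𝓝[<] b, K * (b - u) ≤ m :=
  ((by fun_prop : Continuous fun u => K * (b - u)).tendsto' b 0 (by simp)
    |>.mono_left nhdsWithin_le_nhds).eventually (eventually_le_nhds hm)

theorem exists_sqrt_edge_bound {w X : ℝ → ℝ} (hw : ContDiff ℝ 2 w) (hX : ContDiff ℝ 2 X) {b : ℝ}
    (hwb : w b = 0) (hw' : deriv w b < 0) (hX' : 0 < deriv X b) :
    ∃ C δ : ℝ, 0 < C ∧ 0 < δ ∧ ∀ x ∈ Ioo (X b - δ) (X b), ∃ u, X u = x ∧ 0 < w u ∧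
      |√(w u) - √(-deriv w b / deriv X b) * √(X b - x)| ≤ C * √(X b - x) * (X b - x) := by
  set α := -deriv w b
  set β := deriv X b
  have hα : 0 < α := neg_pos.2 hw'
  obtain ⟨K₁, hK₁, hw₁⟩ := exists_eventually_abs_sub_sub_deriv_mul_le hw b
  obtain ⟨K₂, hK₂, hX₂⟩ := exists_eventually_abs_sub_sub_deriv_mul_le hX b
  obtain ⟨l, hlb : l < b, hl⟩ := mem_nhdsLT_iff_exists_Ico_subset.1 <|
    hw₁.and <| hX₂.and <| (eventually_mul_sub_le K₁ (half_pos hα)).and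
      (eventually_mul_sub_le K₂ (half_pos hX'))
  have estimate : ∀ u ∈ Ico l b, 0 < w u ∧ 0 < X b - X u ∧
      |w u - α / β * (X b - X u)| ≤ (K₁ + α / β * K₂) * (2 / β) ^ 2 * (X b - X u) ^ 2 := by
    intro u hu
    obtain ⟨hwu, hXu, hK₁, hK₂⟩ := hl hu
    rw [hwb, show 0 - w u - deriv w b * (b - u) = -(w u - α * (b - u)) by ring, abs_neg] at hwu
    exact abs_sub_div_mul_le_of_abs_sub_mul_le hα hX' (sub_pos.2 hu.2) hK₁ hK₂ hwu hXu
  set C₀ := (K₁ + α / β * K₂) * (2 / β) ^ 2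
  have hαβ : 0 < α / β := div_pos hα hX'
  refine ⟨C₀ / √(α / β), X b - X l, by positivity, (estimate l ⟨le_rfl, hlb⟩).2.1,
    fun x hx => ?_⟩
  obtain ⟨u, hu, rfl⟩ := intermediate_value_Ioo hlb.le hX.continuous.continuousOn
    ⟨by linarith [hx.1], hx.2⟩
  obtain ⟨hw_pos, ht, hbound⟩ := estimate u (Ioo_subset_Ico_self hu)
  refine ⟨u, rfl, hw_pos, ?_⟩
  set t := X b - X u
  calc |√(w u) - √(α / β) * √t| = |√(w u) - √(α / β * t)| := by rw [Real.sqrt_mul hαβ.le]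
    _ ≤ |w u - α / β * t| / √(α / β * t) := abs_sqrt_sub_sqrt_le _ (by positivity)
    _ ≤ C₀ * t ^ 2 / √(α / β * t) := by gcongr
    _ = C₀ / √(α / β) * √t * t := by
        rw [Real.sqrt_mul hαβ.le]
        have := Real.sqrt_pos.2 ht
        field_simp
        rw [Real.sq_sqrt ht.le]

open ComplexConjugate in
lemma abs_im_eq_of_cubic_roots {b c d : ℝ} {ξ η : ℂ}
    (hξ : ξ ^ 3 + b * ξ ^ 2 + c * ξ + d = 0) (hξ' : ξ.im ≠ 0)
    (hη : η ^ 3 + b * η ^ 2 + c * η + d = 0) (hη' : η.im ≠ 0) : |η.im| = |ξ.im| := by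
  have hξc : conj ξ ^ 3 + b * conj ξ ^ 2 + c * conj ξ + d = 0 := by
    simpa using congrArg conj hξ
  set r : ℂ := -b - ξ - conj ξ
  set c₁ : ℂ := c - (ξ * conj ξ + r * (ξ + conj ξ))
  set c₀ : ℂ := d + ξ * conj ξ * r
  -- the linear remainder `c₁ ζ + c₀` vanishes at the distinct points `ξ` and `conj ξ`
  have hdiv : ∀ ζ : ℂ, ζ ^ 3 + b * ζ ^ 2 + c * ζ + d =
      (ζ - ξ) * (ζ - conj ξ) * (ζ - r) + (c₁ * ζ + c₀) := fun ζ => by ring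
  have hc₁ : c₁ = 0 := by
    have hsub : ξ - conj ξ ≠ 0 := by
      rw [Complex.sub_conj]
      exact mul_ne_zero (Complex.ofReal_ne_zero.2 (mul_ne_zero two_ne_zero hξ')) Complex.I_ne_zero
    have hdξ := hdiv ξ
    have hdξc := hdiv (conj ξ)
    refine (mul_eq_zero.1 ?_).resolve_right hsub
    linear_combination hdξc - hdξ + hξ - hξc
  have hc₀ : c₀ = 0 := by linear_combination hξ - hdiv ξ - ξ * hc₁
  have hr : r.im = 0 := by simp [r]
  have hprod : (η - ξ) * (η - conj ξ) * (η - r) = 0 := by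
    linear_combination hη - hdiv η - η * hc₁ - hc₀
  rcases mul_eq_zero.1 hprod with hprod | hprod
  · rcases mul_eq_zero.1 hprod with h | h
    · rw [sub_eq_zero.1 h]
    · rw [sub_eq_zero.1 h, Complex.conj_im, abs_neg]
  · exact absurd (by simpa [hr] using congrArg Complex.im hprod) hη'

def pasturCubic (a x : ℝ) (ξ : ℂ) : ℂ :=
  ξ ^ 3 - (x : ℂ) * ξ ^ 2 - ((a : ℂ) ^ 2 - 1) * ξ + (x : ℂ) * (a : ℂ) ^ 2

lemma pasturCubic_neg (a x : ℝ) (ξ : ℂ) : pasturCubic a (-x) (-ξ) = -pasturCubic a x ξ := by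
  unfold pasturCubic; push_cast; ring

lemma pasturRho_eq_of_root {a x : ℝ} {ξ : ℂ} (hξ : pasturCubic a x ξ = 0) (him : ξ.im ≠ 0) :
    pasturRho a x = |ξ.im| / Real.pi := by
  have h : ∃ ξ, pasturCubic a x ξ = 0 ∧ ξ.im ≠ 0 := ⟨ξ, hξ, him⟩
  obtain ⟨hη, hη'⟩ := h.choose_spec
  have monic : ∀ ζ : ℂ, pasturCubic a x ζ =
      ζ ^ 3 + ((-x : ℝ) : ℂ) * ζ ^ 2 + ((1 - a ^ 2 : ℝ) : ℂ) * ζ + ((x * a ^ 2 : ℝ) : ℂ) :=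
    fun ζ => by unfold pasturCubic; push_cast; ring
  rw [pasturRho, ← abs_im_eq_of_cubic_roots (monic ξ ▸ hξ) him (monic _ ▸ hη) hη']
  exact dif_pos h

lemma pasturRho_neg (a x : ℝ) : pasturRho a (-x) = pasturRho a x := by
  by_cases h : ∃ ξ, pasturCubic a x ξ = 0 ∧ ξ.im ≠ 0
  · obtain ⟨ξ, hξ, him⟩ := h
    rw [pasturRho_eq_of_root hξ him, pasturRho_eq_of_root (ξ := -ξ)
      (by rw [pasturCubic_neg, hξ, neg_zero]) (by simpa using him), Complex.neg_im, abs_neg]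
  · have h' : ¬∃ ξ, pasturCubic a (-x) ξ = 0 ∧ ξ.im ≠ 0 := fun ⟨ξ, hξ, him⟩ =>
      h ⟨-ξ, by rw [← neg_eq_zero, ← pasturCubic_neg, neg_neg, hξ], by simpa using him⟩
    unfold pasturCubic at h h'
    rw [pasturRho, pasturRho, dif_neg h, dif_neg h']

/- A non-real root `u + i v` of the Pastur cubic at `x` makes it factor as
`(ξ² - 2uξ + u² + v²)(ξ - (x - 2u))`; matching coefficients and solving for `v²` and `x` in terms
of `u` gives `v² = pasturImSq a u` and `x = pasturX a u`. -/

def pasturR (a u : ℝ) : ℝ := √(1 + 16 * a ^ 2 * u ^ 2)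

def pasturImSq (a u : ℝ) : ℝ := (1 - 2 * u ^ 2 - 2 * a ^ 2 + pasturR a u) / 2

def pasturX (a u : ℝ) : ℝ := 2 * u * (1 - 2 * a ^ 2 + pasturR a u) / (1 + pasturR a u)

section Parametrization

variable {a : ℝ}

lemma one_le_pasturR (u : ℝ) : 1 ≤ pasturR a u :=
  Real.one_le_sqrt.2 (by nlinarith [sq_nonneg (a * u)])

lemma sq_pasturR (u : ℝ) : pasturR a u ^ 2 = 1 + 16 * a ^ 2 * u ^ 2 :=
  Real.sq_sqrt (by positivity)

lemma pasturX_sub_mul_sq_add_pasturImSq (u : ℝ) :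
    (pasturX a u - 2 * u) * (u ^ 2 + pasturImSq a u) = -(pasturX a u * a ^ 2) := by
  have := one_le_pasturR (a := a) u
  rw [pasturX, pasturImSq]
  field_simp
  ring

lemma sq_add_pasturImSq_add_pasturX (u : ℝ) :
    u ^ 2 + pasturImSq a u + 2 * u * (pasturX a u - 2 * u) = 1 - a ^ 2 := by
  have := one_le_pasturR (a := a) u
  rw [pasturX, pasturImSq]
  field_simp
  linear_combination sq_pasturR (a := a) u

lemma pasturRho_pasturX {u : ℝ} (hw : 0 < pasturImSq a u) :
    pasturRho a (pasturX a u) = √(pasturImSq a u) / Real.pi := by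
  set v := √(pasturImSq a u)
  have hv : 0 < v := Real.sqrt_pos.2 hw
  have hv2 : (v : ℂ) ^ 2 = pasturImSq a u := by exact_mod_cast Real.sq_sqrt hw.le
  have h₁ := congrArg ((↑) : ℝ → ℂ) (sq_add_pasturImSq_add_pasturX (a := a) u)
  have h₂ := congrArg ((↑) : ℝ → ℂ) (pasturX_sub_mul_sq_add_pasturImSq (a := a) u)
  push_cast at h₁ h₂
  rw [pasturRho_eq_of_root (ξ := u + v * Complex.I) ?_ (by simpa using hv.ne'),
    abs_of_pos (by simpa using hv)]
  · simp
  unfold pasturCubic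
  linear_combination (v ^ 2 * (u + v * Complex.I - (pasturX a u - 2 * u))) * Complex.I_sq -
    (u + v * Complex.I) * h₁ + h₂ - (3 * u + v * Complex.I - pasturX a u) * hv2
end Parametrization

section Calculus

variable {a : ℝ}

lemma contDiff_pasturR : ContDiff ℝ 2 (pasturR a) :=
  ContDiff.sqrt (by fun_prop) fun u => by positivity

lemma contDiff_pasturImSq : ContDiff ℝ 2 (pasturImSq a) := by
  have := contDiff_pasturR (a := a)
  unfold pasturImSq
  fun_prop

lemma contDiff_pasturX : ContDiff ℝ 2 (pasturX a) := by
  have := contDiff_pasturR (a := a)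
  unfold pasturX
  exact ContDiff.div (by fun_prop) (by fun_prop) fun u => by linarith [one_le_pasturR (a := a) u]

lemma hasDerivAt_pasturR (u : ℝ) : HasDerivAt (pasturR a) (16 * a ^ 2 * u / pasturR a u) u := by
  refine (((hasDerivAt_pow 2 u).const_mul (16 * a ^ 2)).const_add 1 |>.sqrt (by positivity))
    |>.congr_deriv ?_
  rw [pasturR]
  field_simp
  ring

lemma deriv_pasturImSq (u : ℝ) :
    deriv (pasturImSq a) u = -2 * u + 8 * a ^ 2 * u / pasturR a u := by
  have h := (((hasDerivAt_pow 2 u).const_mul 2).const_sub 1 |>.sub_const (2 * a ^ 2) |>.add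
    (hasDerivAt_pasturR (a := a) u)).div_const 2
  rw [(show HasDerivAt (pasturImSq a) _ u from h).deriv]
  norm_num
  ring

lemma deriv_pasturX (u : ℝ) :
    deriv (pasturX a) u = 2 - 4 * a ^ 2 / (pasturR a u * (1 + pasturR a u)) := by
  have hR := one_le_pasturR (a := a) u
  have h := ((hasDerivAt_id u).const_mul 2 |>.mul ((hasDerivAt_pasturR (a := a) u).const_add
    (1 - 2 * a ^ 2))).div ((hasDerivAt_pasturR (a := a) u).const_add 1) (by linarith)
  rw [(show HasDerivAt (pasturX a) _ u from h).deriv]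
  simp only [Pi.mul_apply, id]
  field_simp
  linear_combination (-4 * a ^ 2) * sq_pasturR (a := a) u

end Calculus

section EdgePoints

lemma sq_s8 (a : ℝ) : s8 a ^ 2 = 1 + 8 * a ^ 2 := Real.sq_sqrt (by positivity)

lemma s8_pos (a : ℝ) : 0 < s8 a := Real.sqrt_pos.2 (by positivity)

lemma sq_qBr (a : ℝ) : qBr a ^ 2 = 1 / 2 + a ^ 2 + s8 a / 2 :=
  Real.sq_sqrt (by linarith [s8_pos a, sq_nonneg a])

lemma qBr_pos (a : ℝ) : 0 < qBr a := Real.sqrt_pos.2 (by linarith [s8_pos a, sq_nonneg a])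

lemma pasturR_qBr (a : ℝ) : pasturR a (qBr a) = s8 a + 4 * a ^ 2 := by
  rw [pasturR, show 1 + 16 * a ^ 2 * qBr a ^ 2 = (s8 a + 4 * a ^ 2) ^ 2 by
    linear_combination 16 * a ^ 2 * sq_qBr a - sq_s8 a]
  exact Real.sqrt_sq (by linarith [s8_pos a, sq_nonneg a])

lemma pasturImSq_qBr (a : ℝ) : pasturImSq a (qBr a) = 0 := by
  rw [pasturImSq, pasturR_qBr]; linear_combination -sq_qBr a

lemma pasturX_qBr (a : ℝ) : pasturX a (qBr a) = z1 a := by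
  have := s8_pos a
  rw [pasturX, pasturR_qBr, z1, div_eq_div_iff (by positivity) (by positivity)]
  linear_combination qBr a * sq_s8 a

lemma deriv_pasturImSq_qBr_neg (a : ℝ) : deriv (pasturImSq a) (qBr a) < 0 := by
  have := s8_pos a
  have := qBr_pos a
  have : 8 * a ^ 2 * qBr a / (s8 a + 4 * a ^ 2) < 2 * qBr a := by
    rw [div_lt_iff₀ (by positivity)]; nlinarith
  rw [deriv_pasturImSq, pasturR_qBr]
  linarith

lemma deriv_pasturX_qBr_pos (a : ℝ) : 0 < deriv (pasturX a) (qBr a) := by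
  have := s8_pos a
  rw [deriv_pasturX, pasturR_qBr, sub_pos, div_lt_iff₀ (by positivity)]
  nlinarith [sq_nonneg a]

variable {a : ℝ} (ha : 1 < a)
include ha

lemma three_lt_s8 : 3 < s8 a := Real.lt_sqrt (by norm_num) |>.2 (by nlinarith)

lemma s8_lt : s8 a < 1 + 2 * a ^ 2 :=
  Real.sqrt_lt' (by positivity) |>.2 (by nlinarith [one_lt_pow₀ ha two_ne_zero])

lemma sq_pBr : pBr a ^ 2 = 1 / 2 + a ^ 2 - s8 a / 2 := Real.sq_sqrt (by linarith [s8_lt ha])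

lemma pBr_pos : 0 < pBr a := Real.sqrt_pos.2 (by linarith [s8_lt ha])

lemma pasturR_neg_pBr : pasturR a (-pBr a) = 4 * a ^ 2 - s8 a := by
  rw [pasturR, neg_sq, show 1 + 16 * a ^ 2 * pBr a ^ 2 = (4 * a ^ 2 - s8 a) ^ 2 by
    linear_combination 16 * a ^ 2 * sq_pBr ha - sq_s8 a]
  exact Real.sqrt_sq (by nlinarith [s8_lt ha])

lemma pasturImSq_neg_pBr : pasturImSq a (-pBr a) = 0 := by
  rw [pasturImSq, pasturR_neg_pBr ha]; linear_combination -sq_pBr ha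

lemma pasturX_neg_pBr : pasturX a (-pBr a) = -z2 a := by
  have := three_lt_s8 ha
  have := s8_lt ha
  rw [pasturX, pasturR_neg_pBr ha, z2, neg_div', div_eq_div_iff (by nlinarith) (by linarith)]
  linear_combination pBr a * sq_s8 a

lemma deriv_pasturImSq_neg_pBr_neg : deriv (pasturImSq a) (-pBr a) < 0 := by
  have := s8_pos a
  have := pBr_pos ha
  have := s8_lt ha
  have : 2 * pBr a < 8 * a ^ 2 * pBr a / (4 * a ^ 2 - s8 a) := by
    rw [lt_div_iff₀ (by nlinarith)]; nlinarith
  rw [deriv_pasturImSq, pasturR_neg_pBr ha]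
  simp only [mul_neg, neg_div]
  linarith

lemma deriv_pasturX_neg_pBr_pos : 0 < deriv (pasturX a) (-pBr a) := by
  have h₁ : 1 < 4 * a ^ 2 - s8 a := by nlinarith [s8_lt ha]
  have h₂ : 2 * a ^ 2 < 1 + (4 * a ^ 2 - s8 a) := by linarith [s8_lt ha]
  rw [deriv_pasturX, pasturR_neg_pBr ha, sub_pos, div_lt_iff₀ (by positivity)]
  nlinarith [mul_lt_mul'' h₁ h₂ zero_le_one (by positivity)]

lemma z2_lt_z1 : z2 a < z1 a := by
  have := three_lt_s8 ha
  have hp := pBr_pos ha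
  have hq := qBr_pos a
  have hpq : pBr a < qBr a := by nlinarith [sq_pBr ha, sq_qBr a, s8_pos a]
  calc z2 a < pBr a := by rw [z2, div_lt_iff₀ (by linarith)]; nlinarith
    _ < qBr a := hpq
    _ < z1 a := by rw [z1, lt_div_iff₀ (by linarith)]; nlinarith

end EdgePoints

lemma exists_pasturRho_edge_bound {a b z : ℝ} (hb : pasturImSq a b = 0)
    (hw : deriv (pasturImSq a) b < 0) (hX : 0 < deriv (pasturX a) b) (hz : pasturX a b = z) :
    ∃ ρ C δ : ℝ, 0 < ρ ∧ 0 < C ∧ 0 < δ ∧ ∀ x ∈ Ioo (z - δ) z,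
      |pasturRho a x - ρ / Real.pi * √(z - x)| ≤ C * √(z - x) * (z - x) := by
  subst hz
  obtain ⟨C, δ, hC, hδ, h⟩ :=
    exists_sqrt_edge_bound contDiff_pasturImSq contDiff_pasturX hb hw hX
  refine ⟨_, C / Real.pi, δ, Real.sqrt_pos.2 (div_pos (neg_pos.2 hw) hX), by positivity, hδ,
    fun x hx => ?_⟩
  obtain ⟨u, rfl, hwu, hu⟩ := h x hx
  rw [pasturRho_pasturX hwu, div_mul_eq_mul_div, ← sub_div, abs_div,
    abs_of_pos Real.pi_pos, div_le_iff₀ Real.pi_pos]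
  exact hu.trans_eq (by field_simp)

/-- For `a > 1` there are constants `ρ₁, ρ₂ > 0` such that `ρ` vanishes like a
square root at the edge points: `ρ(x) = (ρ₁/π)|x - z₁|^{1/2}(1 + O(|x - z₁|))` as `x → z₁`
from inside `(z₂,z₁)`, `ρ(x) = (ρ₂/π)|x - z₂|^{1/2}(1 + O(|x - z₂|))` as `x → z₂` from inside
`(z₂,z₁)`, and by the symmetry `ρ(-x) = ρ(x)` the same holds with the same constants at
`-z₁` and `-z₂` from inside `(-z₁,-z₂)`. -/
theorem statement4 (a : ℝ) (ha : 1 < a) :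
    ∃ ρ₁ ρ₂ : ℝ, 0 < ρ₁ ∧ 0 < ρ₂ ∧
      ∃ C δ : ℝ, 0 < C ∧ 0 < δ ∧ δ < z1 a - z2 a ∧
        (∀ x ∈ Set.Ioo (z1 a - δ) (z1 a),
          |pasturRho a x - ρ₁ / Real.pi * Real.sqrt (z1 a - x)| ≤
            C * Real.sqrt (z1 a - x) * (z1 a - x)) ∧
        (∀ x ∈ Set.Ioo (z2 a) (z2 a + δ),
          |pasturRho a x - ρ₂ / Real.pi * Real.sqrt (x - z2 a)| ≤
            C * Real.sqrt (x - z2 a) * (x - z2 a)) ∧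
        (∀ x ∈ Set.Ioo (-z1 a) (-z1 a + δ),
          |pasturRho a x - ρ₁ / Real.pi * Real.sqrt (x + z1 a)| ≤
            C * Real.sqrt (x + z1 a) * (x + z1 a)) ∧
        (∀ x ∈ Set.Ioo (-z2 a - δ) (-z2 a),
          |pasturRho a x - ρ₂ / Real.pi * Real.sqrt (-z2 a - x)| ≤
            C * Real.sqrt (-z2 a - x) * (-z2 a - x)) := by
  obtain ⟨ρ₁, C₁, δ₁, hρ₁, hC₁, hδ₁, h₁⟩ := exists_pasturRho_edge_bound (pasturImSq_qBr a)
    (deriv_pasturImSq_qBr_neg a) (deriv_pasturX_qBr_pos a) (pasturX_qBr a)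
  obtain ⟨ρ₂, C₂, δ₂, hρ₂, -, hδ₂, h₂⟩ := exists_pasturRho_edge_bound (pasturImSq_neg_pBr ha)
    (deriv_pasturImSq_neg_pBr_neg ha) (deriv_pasturX_neg_pBr_pos ha) (pasturX_neg_pBr ha)
  have hz := z2_lt_z1 ha
  set C := max C₁ C₂
  set δ := min (min δ₁ δ₂) ((z1 a - z2 a) / 2)
  have hδ₁' : δ ≤ δ₁ := (min_le_left _ _).trans (min_le_left _ _)
  have hδ₂' : δ ≤ δ₂ := (min_le_left _ _).trans (min_le_right _ _)
  have left₁ : ∀ x ∈ Ioo (z1 a - δ) (z1 a),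
      |pasturRho a x - ρ₁ / Real.pi * √(z1 a - x)| ≤ C * √(z1 a - x) * (z1 a - x) :=
    fun x hx => (h₁ x ⟨by linarith [hx.1], hx.2⟩).trans <| by
      have := sub_pos.2 hx.2; gcongr; exact le_max_left _ _
  have left₂ : ∀ x ∈ Ioo (-z2 a - δ) (-z2 a),
      |pasturRho a x - ρ₂ / Real.pi * √(-z2 a - x)| ≤ C * √(-z2 a - x) * (-z2 a - x) :=
    fun x hx => (h₂ x ⟨by linarith [hx.1], hx.2⟩).trans <| by
      have := sub_pos.2 hx.2; gcongr; exact le_max_right _ _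
  refine ⟨ρ₁, ρ₂, hρ₁, hρ₂, C, δ, lt_max_of_lt_left hC₁, lt_min (lt_min hδ₁ hδ₂) (by linarith),
    (min_le_right _ _).trans_lt (by linarith), left₁, fun x hx => ?_, fun x hx => ?_, left₂⟩
  · have := left₂ (-x) ⟨by linarith [hx.2], by linarith [hx.1]⟩
    rwa [pasturRho_neg, show -z2 a - -x = x - z2 a by ring] at this
  · have := left₁ (-x) ⟨by linarith [hx.2], by linarith [hx.1]⟩
    rwa [pasturRho_neg, show z1 a - -x = x + z1 a by ring] at this

end
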